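/- arXiv:2211.03257 — 2 statements merged into one kernel-verified Lean document; each statement's English description precedes it below -/
import Mathlib

section
/- Let L be a lattice with a ℤ-action as above and X the quotient graph on L/ℤ. Then X satisfies the quadrangle condition: for every n ≥ 2 and vertices x, y, z, t ∈ X with d(x,y) = d(x,z) = n, d(y,t) = d(z,t) = 1 and d(x,t) = n + 1, there exists a vertex u ∈ X with d(x,u) = n - 1 and d(u,y) = d(u,z) = 1. -/
open SimpleGraph

/-- The orbit relation of the `ℤ`-action on `L` generated by the order
automorphism `T` (the action of `n` is `T ^ n`, written `x + n` in the paper). -/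
def zOrbitRel {L : Type*} [Lattice L] (T : L ≃o L) (x y : L) : Prop :=
  ∃ k : ℤ, (T ^ k) x = y

/-- The graph `X` on the quotient `L/ℤ`, with an edge between two distinct classes `x, y`
whenever some representatives satisfy `x₀ ≤ y₀ ≤ x₀ + 1`. -/
def quotGraph {L : Type*} [Lattice L] (T : L ≃o L) : SimpleGraph (Quot (zOrbitRel T)) where
  Adj x y := x ≠ y ∧ ∃ x₀ y₀ : L, Quot.mk _ x₀ = x ∧ Quot.mk _ y₀ = y ∧
    x₀ ≤ y₀ ∧ y₀ ≤ T x₀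
  symm := by
    constructor
    rintro x y ⟨hne, x₀, y₀, hx, hy, h1, h2⟩
    refine ⟨hne.symm, y₀, T x₀, hy, ?_, h2, T.monotone h1⟩
    rw [← hx]
    exact (Quot.sound ⟨(1 : ℤ), by simp⟩).symm
  loopless := by constructor; rintro x ⟨hne, -⟩; exact hne rfl

/-!
Fix a representative `a` of `x`. A vertex lies within distance `m` of `[a]` exactly when it has a
representative in the interval `[a, a + m]`. Take such representatives `t ≤ a + n + 1` of `t` and
`y, z ≤ a + n` of `y, z`; since `d(x, t) > n`, adjacency forces `y ≤ t ≤ y + 1` and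
`z ≤ t ≤ z + 1`. Then `u = a ⊔ ((y ⊔ z) - 1)` lies in `[a, a + n - 1]` and one step below both `y`
and `z`, so `d(x, u) ≤ n - 1` and `d(u, y), d(u, z) ≤ 1`; the triangle inequality forces equality.
-/

namespace OrderIso

variable {L : Type*} [Preorder L] (T : L ≃o L)

lemma apply_zpow_apply (k : ℤ) (x : L) : T ((T ^ k) x) = (T ^ k) (T x) :=
  DFunLike.congr_fun (Commute.self_zpow T k).eq x

lemma zpow_add_apply (j k : ℤ) (x : L) : (T ^ (j + k)) x = (T ^ j) ((T ^ k) x) := by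
  rw [zpow_add, RelIso.mul_apply]

lemma zpow_add_one_apply (k : ℤ) (x : L) : (T ^ (k + 1)) x = T ((T ^ k) x) := by
  rw [zpow_add_one, RelIso.mul_apply, apply_zpow_apply]

lemma monotone_zpow_apply (hT : ∀ x, x ≤ T x) (x : L) : Monotone fun k : ℤ ↦ (T ^ k) x :=
  monotone_int_of_le_succ fun k ↦ by
    simp only [zpow_add_one_apply]
    exact hT _

lemma le_zpow_apply (hT : ∀ x, x ≤ T x) {k : ℤ} (hk : 0 ≤ k) (x : L) : x ≤ (T ^ k) x := by
  simpa using monotone_zpow_apply T hT x hk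

end OrderIso

open OrderIso

section

variable {L : Type*} [Lattice L] (T : L ≃o L)

lemma zOrbitRel_equivalence : Equivalence (zOrbitRel T) where
  refl x := ⟨0, rfl⟩
  symm := by
    rintro x y ⟨k, rfl⟩
    exact ⟨-k, by rw [← zpow_add_apply, neg_add_cancel, zpow_zero, RelIso.one_apply]⟩
  trans := by
    rintro x y z ⟨k, rfl⟩ ⟨l, rfl⟩
    exact ⟨l + k, zpow_add_apply T l k x⟩

lemma zOrbitRel_of_quot_mk_eq {x y : L} (h : Quot.mk (zOrbitRel T) x = Quot.mk _ y) :
    zOrbitRel T x y := by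
  rwa [Quot.eq, (zOrbitRel_equivalence T).eqvGen_iff] at h

lemma quot_mk_zpow_apply (k : ℤ) (x : L) :
    Quot.mk (zOrbitRel T) ((T ^ k) x) = Quot.mk _ x :=
  Quot.sound <| (zOrbitRel_equivalence T).symm ⟨k, rfl⟩

lemma quot_mk_symm_apply (x : L) : Quot.mk (zOrbitRel T) (T.symm x) = Quot.mk _ x := by
  rw [← quot_mk_zpow_apply T (-1) x, zpow_neg_one]
  rfl

variable {T}

lemma quotGraph.exists_le_le_apply_of_adj {a : L} {Y : Quot (zOrbitRel T)}
    (h : (quotGraph T).Adj (Quot.mk _ a) Y) : ∃ b, Quot.mk _ b = Y ∧ a ≤ b ∧ b ≤ T a := by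
  obtain ⟨-, a₀, b₀, ha₀, rfl, hab, hba⟩ := h
  obtain ⟨k, rfl⟩ := zOrbitRel_of_quot_mk_eq T ha₀
  refine ⟨(T ^ k) b₀, quot_mk_zpow_apply T k b₀, (T ^ k).monotone hab, ?_⟩
  rw [apply_zpow_apply]
  exact (T ^ k).monotone hba

lemma quotGraph.exists_le_le_apply_of_adj_right {Y : Quot (zOrbitRel T)} {t : L}
    (h : (quotGraph T).Adj Y (Quot.mk _ t)) : ∃ y, Quot.mk _ y = Y ∧ y ≤ t ∧ t ≤ T y := by
  obtain ⟨b, rfl, htb, hbt⟩ := exists_le_le_apply_of_adj h.symm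
  exact ⟨T.symm b, quot_mk_symm_apply T b, T.symm_apply_le.mpr hbt, by rwa [T.apply_symm_apply]⟩

lemma quotGraph.exists_walk_of_le (hT : ∀ x, x ≤ T x) (m : ℕ) {a b : L} (hab : a ≤ b)
    (hba : b ≤ (T ^ (m : ℤ)) a) :
    ∃ p : (quotGraph T).Walk (Quot.mk _ a) (Quot.mk _ b), p.length ≤ m := by
  induction m generalizing a with
  | zero =>
    obtain rfl : b = a := le_antisymm (by simpa using hba) hab
    exact ⟨.nil, le_rfl⟩
  | succ m ih =>
    -- `b ⊓ T a` is one step above `a` and at most `m` steps below `b`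
    have hcb : b ⊓ T a ≤ b := inf_le_left
    have hbc : b ≤ (T ^ (m : ℤ)) (b ⊓ T a) := by
      rw [OrderIso.map_inf, ← apply_zpow_apply, ← zpow_add_one_apply]
      exact le_inf (le_zpow_apply T hT (by positivity) b) (by simpa using hba)
    obtain ⟨q, hq⟩ := ih hcb hbc
    by_cases hac : Quot.mk (zOrbitRel T) a = Quot.mk _ (b ⊓ T a)
    · exact ⟨q.copy hac.symm rfl, by simpa using hq.trans m.le_succ⟩
    · refine ⟨.cons ⟨hac, a, b ⊓ T a, rfl, rfl, le_inf hab (hT a), inf_le_right⟩ q, ?_⟩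
      exact Nat.succ_le_succ hq

lemma quotGraph.dist_le_of_le (hT : ∀ x, x ≤ T x) (m : ℕ) {a b : L} (hab : a ≤ b)
    (hba : b ≤ (T ^ (m : ℤ)) a) : (quotGraph T).dist (Quot.mk _ a) (Quot.mk _ b) ≤ m := by
  obtain ⟨p, hp⟩ := exists_walk_of_le hT m hab hba
  exact (dist_le p).trans hp

lemma quotGraph.exists_le_of_walk {X Y : Quot (zOrbitRel T)} (p : (quotGraph T).Walk X Y)
    {a : L} (ha : Quot.mk _ a = X) :
    ∃ b, Quot.mk _ b = Y ∧ a ≤ b ∧ b ≤ (T ^ (p.length : ℤ)) a := by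
  induction p generalizing a with
  | nil => exact ⟨a, ha, le_rfl, by simp⟩
  | cons h q ih =>
    subst ha
    obtain ⟨c, hc, hac, hca⟩ := exists_le_le_apply_of_adj h
    obtain ⟨b, hb, hcb, hbc⟩ := ih hc
    refine ⟨b, hb, hac.trans hcb, hbc.trans ?_⟩
    rw [Walk.length_cons, Nat.cast_succ, zpow_add_one_apply, apply_zpow_apply]
    exact (T ^ (q.length : ℤ)).monotone hca

lemma quotGraph.exists_le_of_dist_eq {a : L} {Y : Quot (zOrbitRel T)} {m : ℕ}
    (h : (quotGraph T).dist (Quot.mk _ a) Y = m) (hm : 0 < m) :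
    ∃ b, Quot.mk _ b = Y ∧ a ≤ b ∧ b ≤ (T ^ (m : ℤ)) a := by
  obtain ⟨p, hp⟩ := exists_walk_of_dist_ne_zero (h ▸ hm.ne')
  simpa [hp, h] using exists_le_of_walk p rfl

/-- Any other relative position of the lifts would put a representative of `[t]` in `[a, a + n]`. -/
lemma quotGraph.le_and_le_apply_of_adj (hT : ∀ x, x ≤ T x) {n : ℕ} {a y t : L}
    (hay : a ≤ y) (hya : y ≤ (T ^ (n : ℤ)) a) (hat : a ≤ t) (hta : t ≤ (T ^ ((n + 1 : ℕ) : ℤ)) a)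
    (hdist : n < (quotGraph T).dist (Quot.mk _ a) (Quot.mk _ t))
    (hadj : (quotGraph T).Adj (Quot.mk _ y) (Quot.mk _ t)) : y ≤ t ∧ t ≤ T y := by
  obtain ⟨y', hy', hyt, hty⟩ := exists_le_le_apply_of_adj_right hadj
  obtain ⟨s, rfl⟩ := zOrbitRel_of_quot_mk_eq T hy'.symm
  rcases lt_trichotomy s 0 with hs | rfl | hs
  · have hty : t ≤ y := by
      rw [← zpow_add_one_apply] at hty
      simpa using hty.trans (monotone_zpow_apply T hT y (by omega : s + 1 ≤ 0))
    exact absurd (dist_le_of_le hT n hat (hty.trans hya)) hdist.not_ge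
  · simpa using And.intro hyt hty
  · have hTat : T a ≤ t := by
      calc T a ≤ T y := T.monotone hay
        _ = (T ^ (1 : ℤ)) y := by simp
        _ ≤ (T ^ s) y := monotone_zpow_apply T hT y (by omega)
        _ ≤ t := hyt
    have hlift := dist_le_of_le hT n (T.le_symm_apply.mpr hTat)
      (T.symm_apply_le.mpr (by rwa [← zpow_add_one_apply, ← Nat.cast_succ]))
    rw [quot_mk_symm_apply] at hlift
    exact absurd hlift hdist.not_ge

lemma exists_common_lower_neighbour (hT : ∀ x, x ≤ T x) {k : ℕ} {a y z : L} (hay : a ≤ y)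
    (haz : a ≤ z) (hya : y ≤ (T ^ ((k + 1 : ℕ) : ℤ)) a) (hza : z ≤ (T ^ ((k + 1 : ℕ) : ℤ)) a)
    (hyz : y ≤ T z) (hzy : z ≤ T y) :
    ∃ u, a ≤ u ∧ u ≤ (T ^ (k : ℤ)) a ∧ u ≤ y ∧ y ≤ T u ∧ u ≤ z ∧ z ≤ T u := by
  set u := a ⊔ T.symm (y ⊔ z)
  have hyzu : y ⊔ z ≤ T u := T.symm_apply_le.mp le_sup_right
  refine ⟨u, le_sup_left, sup_le (le_zpow_apply T hT k.cast_nonneg a) ?_,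
    sup_le hay (T.symm_apply_le.mpr (sup_le (hT y) hzy)), le_sup_left.trans hyzu,
    sup_le haz (T.symm_apply_le.mpr (sup_le hyz (hT z))), le_sup_right.trans hyzu⟩
  rw [T.symm_apply_le, ← zpow_add_one_apply, ← Nat.cast_succ]
  exact sup_le hya hza

end

lemma SimpleGraph.dist_eq_of_walk_length_le {V : Type*} {G : SimpleGraph V} {x u y : V}
    {p q : ℕ} (pxu : G.Walk x u) (hxu : pxu.length ≤ p) (puy : G.Walk u y)
    (huy : puy.length ≤ q) (h : G.dist x y = p + q) : G.dist x u = p ∧ G.dist u y = q := by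
  have := puy.reachable.dist_triangle_right x
  have := dist_le pxu
  have := dist_le puy
  omega

theorem quotGraph_quadrangle_condition_general {L : Type*} [Lattice L] (T : L ≃o L)
    (hinc : ∀ x : L, x < T x)
    (n : ℕ) (hn : 2 ≤ n) (x y z t : Quot (zOrbitRel T))
    (hxy : (quotGraph T).dist x y = n) (hxz : (quotGraph T).dist x z = n)
    (hyt : (quotGraph T).dist y t = 1) (hzt : (quotGraph T).dist z t = 1)
    (hxt : (quotGraph T).dist x t = n + 1) :
    ∃ u : Quot (zOrbitRel T), (quotGraph T).dist x u = n - 1 ∧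
      (quotGraph T).dist u y = 1 ∧ (quotGraph T).dist u z = 1 := by
  have hT : ∀ x, x ≤ T x := fun x ↦ (hinc x).le
  obtain ⟨m, rfl⟩ : ∃ m, n = m + 1 := ⟨n - 1, by omega⟩
  obtain ⟨a, rfl⟩ := Quot.exists_rep x
  obtain ⟨t₀, rfl, hat, hta⟩ := quotGraph.exists_le_of_dist_eq hxt (by omega)
  obtain ⟨y₀, rfl, hay, hya⟩ := quotGraph.exists_le_of_dist_eq hxy (by omega)
  obtain ⟨z₀, rfl, haz, hza⟩ := quotGraph.exists_le_of_dist_eq hxz (by omega)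
  obtain ⟨hyt, hty⟩ := quotGraph.le_and_le_apply_of_adj hT hay hya hat hta (by omega)
    (dist_eq_one_iff_adj.mp hyt)
  obtain ⟨hzt, htz⟩ := quotGraph.le_and_le_apply_of_adj hT haz hza hat hta (by omega)
    (dist_eq_one_iff_adj.mp hzt)
  obtain ⟨u, hau, hua, huy, hyu, huz, hzu⟩ :=
    exists_common_lower_neighbour hT hay haz hya hza (hyt.trans htz) (hzt.trans hty)
  obtain ⟨pxu, hpxu⟩ := quotGraph.exists_walk_of_le hT m hau hua
  obtain ⟨puy, hpuy⟩ := quotGraph.exists_walk_of_le hT 1 huy (by simpa using hyu)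
  obtain ⟨puz, hpuz⟩ := quotGraph.exists_walk_of_le hT 1 huz (by simpa using hzu)
  obtain ⟨hxu, huy⟩ := dist_eq_of_walk_length_le pxu hpxu puy hpuy hxy
  obtain ⟨-, huz⟩ := dist_eq_of_walk_length_le pxu hpxu puz hpuz hxz
  exact ⟨_, hxu, huy, huz⟩

/-- Lemma 2.4. The quotient graph `X = L/ℤ` satisfies the quadrangle
condition: for every `n ≥ 2` and vertices `x, y, z, t` with `d(x,y) = d(x,z) = n`,
`d(y,t) = d(z,t) = 1` and `d(x,t) = n + 1`, there is a vertex `u` with `d(x,u) = n - 1`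
and `d(u,y) = d(u,z) = 1`. -/
theorem quotGraph_quadrangle_condition {L : Type*} [Lattice L] (T : L ≃o L)
    (hjoin : ∀ S : Set L, S.Nonempty → BddAbove S → ∃ j, IsLUB S j)
    (hinc : ∀ x : L, x < T x)
    (hcof : ∀ x y : L, ∃ k : ℕ, (T ^ (k : ℤ))⁻¹ x ≤ y ∧ y ≤ (T ^ (k : ℤ)) x)
    (n : ℕ) (hn : 2 ≤ n) (x y z t : Quot (zOrbitRel T))
    (hxy : (quotGraph T).dist x y = n) (hxz : (quotGraph T).dist x z = n)
    (hyt : (quotGraph T).dist y t = 1) (hzt : (quotGraph T).dist z t = 1)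
    (hxt : (quotGraph T).dist x t = n + 1) :
    ∃ u : Quot (zOrbitRel T), (quotGraph T).dist x u = n - 1 ∧
      (quotGraph T).dist u y = 1 ∧ (quotGraph T).dist u z = 1 :=
  quotGraph_quadrangle_condition_general T hinc n hn x y z t hxy hxz hyt hzt hxt
end

section
/- Let L and X be as above (graph on vertex set L). Then X satisfies the triangle condition: for any n ≥ 2 and x, y, z ∈ L with d(x,y) = d(x,z) = n and d(y,z) = 1, there exists u ∈ L with d(u,y) = d(u,z) = 1 and d(u,x) = n - 1. -/
open SimpleGraph

/-- The graph `X` on the vertex set `L`, with an edge between `x` and `y` iff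
`x ≤ y ≤ x + 1` or `y ≤ x ≤ y + 1`, where `x + 1 = T x` for the order automorphism `T`
generating the `ℤ`-action. -/
def stepGraph {L : Type*} [Lattice L] (T : L ≃o L) : SimpleGraph L where
  Adj x y := x ≠ y ∧ ((x ≤ y ∧ y ≤ T x) ∨ (y ≤ x ∧ x ≤ T y))
  symm := ⟨by rintro x y ⟨hne, h⟩; exact ⟨hne.symm, h.symm⟩⟩
  loopless := ⟨by rintro x ⟨hne, -⟩; exact hne rfl⟩

/-!
Writing `a + k` for `T^k a`, the distance in `X` is `d(a, b) = climb a b + climb b a`, where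
`climb a b` is the least `k` with `b ≤ a + k`: along an edge one of the two exponents grows by
at most one, and conversely `a` and `b` are joined through `a ⊔ b` by two monotone walks of
lengths `climb a b` and `climb b a`, obtained by cutting `a + k` down with meets.

If `y ≤ z ≤ y + 1` and `d(x, y) = d(x, z)`, the exponent pairs of `(x, y)` and `(x, z)` either
agree or differ by moving one unit from the second coordinate to the first. In each of the
resulting configurations one of `y ⊓ (x + (p - 1))`, `z ⊔ (x - (q - 1))` or
`(z ⊓ (x + p)) ⊔ (x - (q - 1))`, with `(p, q)` the exponents of `(x, y)`, is a common neighbour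
of `y` and `z` strictly closer to `x`.
-/

namespace OrderIso

variable {α : Type*} [Preorder α] (T : α ≃o α)

theorem pow_succ_apply (k : ℕ) (a : α) : (T ^ (k + 1)) a = T ((T ^ k) a) := by
  rw [pow_succ']; rfl

theorem pow_succ_apply' (k : ℕ) (a : α) : (T ^ (k + 1)) a = (T ^ k) (T a) := by
  rw [pow_succ]; rfl

variable {T}

theorem le_pow_apply (hT : ∀ a, a ≤ T a) (k : ℕ) (a : α) : a ≤ (T ^ k) a := by
  induction k with
  | zero => rw [pow_zero]; rfl
  | succ k ih => rw [pow_succ_apply]; exact ih.trans (hT _)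

theorem symm_pow_apply_le (hT : ∀ a, a ≤ T a) (k : ℕ) (a : α) : (T ^ k).symm a ≤ a :=
  (T ^ k).symm_apply_le.2 (le_pow_apply hT k a)

end OrderIso

namespace stepGraph

open OrderIso

variable {L : Type*} [Lattice L] {T : L ≃o L}

theorem adj_of_le_of_le {a b : L} (hne : a ≠ b) (hab : a ≤ b) (hb : b ≤ T a) :
    (stepGraph T).Adj a b :=
  ⟨hne, .inl ⟨hab, hb⟩⟩

theorem exists_walk_length_le_of_le_of_le_pow (hT : ∀ a, a ≤ T a) (k : ℕ) {a b : L}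
    (hab : a ≤ b) (hb : b ≤ (T ^ k) a) : ∃ p : (stepGraph T).Walk a b, p.length ≤ k := by
  induction k generalizing b with
  | zero =>
    obtain rfl : a = b := le_antisymm hab (by rwa [pow_zero] at hb)
    exact ⟨.nil, le_rfl⟩
  | succ k ih =>
    obtain ⟨p, hp⟩ := ih (le_inf hab (le_pow_apply hT k a)) (inf_le_right : b ⊓ (T ^ k) a ≤ _)
    by_cases hcb : b ⊓ (T ^ k) a = b
    · exact ⟨p.copy rfl hcb, by simpa using hp.trans k.le_succ⟩
    · have hb' : b ≤ T (b ⊓ (T ^ k) a) := by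
        rw [T.map_inf, ← pow_succ_apply]; exact le_inf (hT b) hb
      exact ⟨p.concat (adj_of_le_of_le hcb inf_le_left hb'), by simpa using hp⟩

theorem dist_le_add_of_le_pow (hT : ∀ a, a ≤ T a) {a b : L} {u d : ℕ}
    (hb : b ≤ (T ^ u) a) (ha : a ≤ (T ^ d) b) : (stepGraph T).dist a b ≤ u + d := by
  obtain ⟨p, hp⟩ := exists_walk_length_le_of_le_of_le_pow hT u (le_sup_left : a ≤ a ⊔ b)
    (sup_le (le_pow_apply hT u a) hb)
  obtain ⟨q, hq⟩ := exists_walk_length_le_of_le_of_le_pow hT d (le_sup_right : b ≤ a ⊔ b)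
    (sup_le ha (le_pow_apply hT d b))
  calc (stepGraph T).dist a b ≤ (p.append q.reverse).length := dist_le _
    _ ≤ u + d := by rw [Walk.length_append, Walk.length_reverse]; omega

theorem exists_le_pow_of_walk {a b : L} (p : (stepGraph T).Walk a b) :
    ∃ u d : ℕ, u + d ≤ p.length ∧ b ≤ (T ^ u) a ∧ a ≤ (T ^ d) b := by
  induction p with
  | nil => exact ⟨0, 0, le_rfl, le_rfl, le_rfl⟩
  | cons h p ih =>
    obtain ⟨u, d, hud, hu, hd⟩ := ih
    rcases h.2 with ⟨hac, hca⟩ | ⟨hca, hac⟩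
    · refine ⟨u + 1, d, by rw [Walk.length_cons]; omega, ?_, hac.trans hd⟩
      rw [pow_succ_apply']
      exact hu.trans ((T ^ u).monotone hca)
    · refine ⟨u, d + 1, by rw [Walk.length_cons]; omega, hu.trans ((T ^ u).monotone hca), ?_⟩
      rw [pow_succ_apply]
      exact hac.trans (T.monotone hd)

variable (T) in
noncomputable def climb (a b : L) : ℕ := sInf {k | b ≤ (T ^ k) a}

theorem isLeast_climb {a b : L} (h : (stepGraph T).Reachable a b) :
    IsLeast {k | b ≤ (T ^ k) a} (climb T a b) := by
  obtain ⟨p⟩ := h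
  obtain ⟨u, -, -, hu, -⟩ := exists_le_pow_of_walk p
  exact ⟨Nat.sInf_mem ⟨u, hu⟩, fun _ hk => Nat.sInf_le hk⟩

theorem dist_eq_climb_add_climb (hT : ∀ a, a ≤ T a) {a b : L}
    (h : (stepGraph T).Reachable a b) :
    (stepGraph T).dist a b = climb T a b + climb T b a := by
  refine le_antisymm
    (dist_le_add_of_le_pow hT (isLeast_climb h).1 (isLeast_climb h.symm).1) ?_
  obtain ⟨p, hp⟩ := h.exists_walk_length_eq_dist
  obtain ⟨u, d, hud, hu, hd⟩ := exists_le_pow_of_walk p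
  have hu' := (isLeast_climb h).2 hu
  have hd' := (isLeast_climb h.symm).2 hd
  omega

section CommonNeighbor

variable {x y z : L} {p q : ℕ}

theorem exists_common_neighbor_below (hT : ∀ a, a ≤ T a) (hyz : y ≤ z) (hzy : z ≤ T y)
    (hne : y ≠ z) (hx : x ≤ y) (hz : z ≤ (T ^ (p + 1)) x) (hy : ¬ y ≤ (T ^ p) x) :
    ∃ w, (stepGraph T).Adj w y ∧ (stepGraph T).Adj w z ∧ w ≤ (T ^ p) x ∧ x ≤ w := by
  have hzw : z ≤ T (y ⊓ (T ^ p) x) := by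
    rw [T.map_inf, ← pow_succ_apply]; exact le_inf hzy hz
  refine ⟨y ⊓ (T ^ p) x, adj_of_le_of_le ?_ inf_le_left (hyz.trans hzw),
    adj_of_le_of_le ?_ (inf_le_left.trans hyz) hzw, inf_le_right,
    le_inf hx (le_pow_apply hT p x)⟩
  · exact fun h => hy (h.symm.le.trans inf_le_right)
  · exact fun h => hne (le_antisymm hyz (h.symm.le.trans inf_le_left))

theorem exists_common_neighbor_above (hT : ∀ a, a ≤ T a) (hyz : y ≤ z) (hzy : z ≤ T y)
    (hne : y ≠ z) (hz : z ≤ (T ^ p) x) (hxy : x ≤ (T ^ (q + 1)) y) (hxz : ¬ x ≤ (T ^ q) z) :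
    ∃ w, (stepGraph T).Adj w y ∧ (stepGraph T).Adj w z ∧ w ≤ (T ^ p) x ∧ x ≤ (T ^ q) w := by
  have hwy : z ⊔ (T ^ q).symm x ≤ T y :=
    sup_le hzy ((T ^ q).symm_apply_le.2 (by rwa [← pow_succ_apply']))
  refine ⟨z ⊔ (T ^ q).symm x, (adj_of_le_of_le ?_ (hyz.trans le_sup_left) hwy).symm,
    (adj_of_le_of_le ?_ le_sup_left (hwy.trans (T.monotone hyz))).symm,
    sup_le hz ((symm_pow_apply_le hT q x).trans (le_pow_apply hT p x)),
    (T ^ q).symm_apply_le.1 le_sup_right⟩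
  · exact fun h => hne (le_antisymm hyz (le_sup_left.trans h.symm.le))
  · exact fun h => hxz ((T ^ q).symm_apply_le.1 (le_sup_right.trans h.symm.le))

theorem exists_common_neighbor_between (hT : ∀ a, a ≤ T a) (hyz : y ≤ z) (hzy : z ≤ T y)
    (hy : y ≤ (T ^ p) x) (hz : z ≤ (T ^ (p + 1)) x) (hz' : ¬ z ≤ (T ^ p) x)
    (hxy : x ≤ (T ^ (q + 1)) y) (hxy' : ¬ x ≤ (T ^ q) y) (hxz : x ≤ (T ^ q) z) :
    ∃ w, (stepGraph T).Adj w y ∧ (stepGraph T).Adj w z ∧ w ≤ (T ^ p) x ∧ x ≤ (T ^ q) w := by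
  set w := z ⊓ (T ^ p) x ⊔ (T ^ q).symm x
  have hwx : w ≤ (T ^ p) x :=
    sup_le inf_le_right ((symm_pow_apply_le hT q x).trans (le_pow_apply hT p x))
  have hwy : w ≤ T y :=
    sup_le (inf_le_left.trans hzy) ((T ^ q).symm_apply_le.2 (by rwa [← pow_succ_apply']))
  have hzw : z ≤ T w :=
    calc z ≤ T z ⊓ (T ^ (p + 1)) x := le_inf (hT z) hz
      _ = T (z ⊓ (T ^ p) x) := by rw [T.map_inf, pow_succ_apply]
      _ ≤ T w := T.monotone le_sup_left
  refine ⟨w, (adj_of_le_of_le ?_ (le_sup_of_le_left (le_inf hyz hy)) hwy).symm,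
    adj_of_le_of_le ?_ (sup_le inf_le_left ((T ^ q).symm_apply_le.2 hxz)) hzw, hwx,
    (T ^ q).symm_apply_le.1 le_sup_right⟩
  · exact fun h => hxy' ((T ^ q).symm_apply_le.1 (le_sup_right.trans h.symm.le))
  · exact fun h => hz' (h.symm.le.trans hwx)

theorem exists_common_neighbor_dist_lt (hT : ∀ a, a ≤ T a) (hyz : y ≤ z) (hzy : z ≤ T y)
    (hne : y ≠ z) (hd : (stepGraph T).dist x z = (stepGraph T).dist x y)
    (h0 : (stepGraph T).dist x y ≠ 0) :
    ∃ w, (stepGraph T).Adj w y ∧ (stepGraph T).Adj w z ∧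
      (stepGraph T).dist x w < (stepGraph T).dist x y := by
  have hxy : (stepGraph T).Reachable x y := .of_dist_ne_zero h0
  have hxz : (stepGraph T).Reachable x z := .of_dist_ne_zero (hd ▸ h0)
  rw [dist_eq_climb_add_climb hT hxz] at hd
  rw [dist_eq_climb_add_climb hT hxy] at hd h0 ⊢
  have hp := isLeast_climb hxy
  have hq := isLeast_climb hxy.symm
  have hp₂ := isLeast_climb hxz
  have hq₂ := isLeast_climb hxz.symm
  generalize climb T x y = p at *
  generalize climb T y x = q at *
  generalize climb T x z = p₂ at *
  generalize climb T z x = q₂ at *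
  have hpp₂ : p ≤ p₂ := hp.2 (hyz.trans hp₂.1)
  have hp₂p : p₂ ≤ p + 1 :=
    hp₂.2 (hzy.trans (by rw [pow_succ_apply]; exact T.monotone hp.1))
  have hq₂q : q₂ ≤ q := hq₂.2 (hq.1.trans ((T ^ q).monotone hyz))
  rcases Nat.eq_zero_or_pos q with rfl | hq0
  · obtain ⟨p, rfl⟩ : ∃ p', p = p' + 1 := ⟨p - 1, by omega⟩
    obtain rfl : p₂ = p + 1 := by omega
    obtain ⟨w, hwy, hwz, hw, hxw⟩ := exists_common_neighbor_below hT hyz hzy hne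
      (by simpa using hq.1) hp₂.1 (fun h => by have := hp.2 h; omega)
    exact ⟨w, hwy, hwz, (dist_le_add_of_le_pow hT hw (by rwa [pow_zero])).trans_lt (by omega)⟩
  obtain ⟨q, rfl⟩ : ∃ q', q = q' + 1 := ⟨q - 1, by omega⟩
  obtain rfl | rfl : q₂ = q + 1 ∨ q₂ = q := by omega
  · obtain rfl : p₂ = p := by omega
    obtain ⟨w, hwy, hwz, hw, hxw⟩ := exists_common_neighbor_above hT hyz hzy hne hp₂.1 hq.1
      (fun h => by have := hq₂.2 h; omega)
    exact ⟨w, hwy, hwz, (dist_le_add_of_le_pow hT hw hxw).trans_lt (by omega)⟩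
  · obtain rfl : p₂ = p + 1 := by omega
    obtain ⟨w, hwy, hwz, hw, hxw⟩ := exists_common_neighbor_between hT hyz hzy hp.1 hp₂.1
      (fun h => by have := hp₂.2 h; omega) hq.1 (fun h => by have := hq.2 h; omega) hq₂.1
    exact ⟨w, hwy, hwz, (dist_le_add_of_le_pow hT hw hxw).trans_lt (by omega)⟩

end CommonNeighbor

end stepGraph

theorem stepGraph_triangle_condition_general {L : Type*} [Lattice L] (T : L ≃o L)
    (hinc : ∀ x : L, x < T x)
    (n : ℕ) (hn : 2 ≤ n) (x y z : L)
    (hxy : (stepGraph T).dist x y = n) (hxz : (stepGraph T).dist x z = n)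
    (hyz : (stepGraph T).dist y z = 1) :
    ∃ u : L, (stepGraph T).dist u y = 1 ∧ (stepGraph T).dist u z = 1 ∧
      (stepGraph T).dist u x = n - 1 := by
  have hT : ∀ a, a ≤ T a := fun a => (hinc a).le
  obtain ⟨w, hwy, hwz, hxw⟩ : ∃ w, (stepGraph T).Adj w y ∧ (stepGraph T).Adj w z ∧
      (stepGraph T).dist x w < n := by
    obtain ⟨hne, ⟨hle, hle'⟩ | ⟨hle, hle'⟩⟩ := dist_eq_one_iff_adj.mp hyz
    · exact hxy ▸ stepGraph.exists_common_neighbor_dist_lt hT hle hle' hne (hxz.trans hxy.symm)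
        (by omega)
    · obtain ⟨w, hwz, hwy, hw⟩ := stepGraph.exists_common_neighbor_dist_lt hT hle hle' hne.symm
        (hxy.trans hxz.symm) (by omega)
      exact ⟨w, hwy, hwz, hxz ▸ hw⟩
  have htri : n ≤ (stepGraph T).dist x w + 1 := by
    simpa [hxy, dist_eq_one_iff_adj.mpr hwy] using hwy.reachable.dist_triangle_right x
  refine ⟨w, dist_eq_one_iff_adj.mpr hwy, dist_eq_one_iff_adj.mpr hwz, ?_⟩
  rw [SimpleGraph.dist_comm]
  omega

/-- Lemma 3.4. The graph `X` on `L` satisfies the triangle condition: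
for any `n ≥ 2` and `x, y, z ∈ L` with `d(x,y) = d(x,z) = n` and `d(y,z) = 1`, there is
`u ∈ L` with `d(u,y) = d(u,z) = 1` and `d(u,x) = n - 1`. -/
theorem stepGraph_triangle_condition {L : Type*} [Lattice L] (T : L ≃o L)
    (hjoin : ∀ S : Set L, S.Nonempty → BddAbove S → ∃ j, IsLUB S j)
    (hinc : ∀ x : L, x < T x)
    (hcof : ∀ x y : L, ∃ k : ℕ, (T ^ (k : ℤ))⁻¹ x ≤ y ∧ y ≤ (T ^ (k : ℤ)) x)
    (n : ℕ) (hn : 2 ≤ n) (x y z : L)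
    (hxy : (stepGraph T).dist x y = n) (hxz : (stepGraph T).dist x z = n)
    (hyz : (stepGraph T).dist y z = 1) :
    ∃ u : L, (stepGraph T).dist u y = 1 ∧ (stepGraph T).dist u z = 1 ∧
      (stepGraph T).dist u x = n - 1 :=
  stepGraph_triangle_condition_general T hinc n hn x y z hxy hxz hyz
end
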